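/- Let N ≥ 1. Then |GHZ_N⟩⟨GHZ_N| = (1/2^N) · [ Σ_{S ⊆ Fin N, |S| even} Z_S + Σ_{T ⊆ Fin N, |T| even} (−1)^{|T|/2} · W_T ], where Z_S denotes the Pauli string whose j-th factor is Z for j ∈ S and I₂ otherwise, and W_T denotes the Pauli string whose j-th factor is Y for j ∈ T and X otherwise. (Pauli-basis decomposition of the N-qubit GHZ density matrix, grouping the terms by the number of Z factors and by the even number of Y factors with sign (−1)^{|T|/2}.) -/

import Mathlib

/-
Entrywise, `Z_S(x, y) = δ_{y,x} ∏_{j ∈ S} (-1)^{x_j}` and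
`W_T(x, y) = δ_{y,x̄} (-i)^{|T|} ∏_{j ∈ T} (-1)^{x_j}`, where `x̄` is the bitwise complement of `x`;
for `|T|` even the sign `(-1)^{|T|/2}` cancels `(-i)^{|T|}`. So both sums reduce to the even part
`∑_{|S| even} ∏_{j ∈ S} ε_j = (∏ (1 + ε_j) + ∏ (1 - ε_j)) / 2` of `∏ (1 + ε_j)`, with
`ε_j = (-1)^{x_j}`; it equals `2^{N-1}` if `x` is constant and `0` otherwise. Hence the right side
has entry `1/2` exactly when `x` is constant and `y ∈ {x, x̄}`, that is, when `x` and `y` are both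
constant, as does `|GHZ⟩⟨GHZ|`.
-/

open Matrix BigOperators

noncomputable section

/-- The Pauli matrices, indexed by `0 ↦ X`, `1 ↦ Y`, `2 ↦ Z`. -/
def pauli : Fin 3 → Matrix (Fin 2) (Fin 2) ℂ
  | 0 => !![0, 1; 1, 0]
  | 1 => !![0, -Complex.I; Complex.I, 0]
  | 2 => !![1, 0; 0, -1]

def outer {n : Type*} (v : n → ℂ) : Matrix n n ℂ :=
  Matrix.of fun a b => v a * (starRingEnd ℂ) (v b)

def tensorProd {N : ℕ} (A : Fin N → Matrix (Fin 2) (Fin 2) ℂ) :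
    Matrix (Fin N → Fin 2) (Fin N → Fin 2) ℂ :=
  Matrix.of fun x y => ∏ j, A j (x j) (y j)

def ghz (N : ℕ) : (Fin N → Fin 2) → ℂ :=
  fun x => if x = (fun _ => 0) ∨ x = (fun _ => 1) then 1 / (Real.sqrt 2 : ℂ) else 0

open Finset

theorem Finset.two_mul_sum_filter_even_card_prod {ι R : Type*} [Fintype ι] [CommRing R]
    (f : ι → R) :
    2 * ∑ S ∈ univ.filter (fun S : Finset ι => Even S.card), ∏ j ∈ S, f j =
      ∏ j, (1 + f j) + ∏ j, (1 - f j) := by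
  classical
  rw [prod_one_add, prod_sub, ← sum_add_distrib, sum_filter, mul_sum, powerset_univ]
  refine sum_congr rfl fun S _ => ?_
  rcases Nat.even_or_odd S.card with h | h
  · simp [h, h.neg_one_pow]; ring
  · simp [Nat.not_even_iff_odd.mpr h, h.neg_one_pow]

theorem neg_one_pow_div_two_mul_neg_I_pow {n : ℕ} (hn : Even n) :
    (-1 : ℂ) ^ (n / 2) * (-Complex.I) ^ n = 1 := by
  obtain ⟨m, rfl⟩ := hn
  rw [← two_mul, Nat.mul_div_cancel_left m two_pos, pow_mul, neg_sq, Complex.I_sq, ← mul_pow]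
  norm_num

theorem Fin.two_ne_iff_eq_rev (a b : Fin 2) : a ≠ b ↔ b = a.rev := by
  revert a b; decide

theorem Fintype.prod_ite_eq_const {ι α R : Type*} [Fintype ι] [DecidableEq α]
    [CommMonoidWithZero R] (x : ι → α) (a : α) (c : R) :
    ∏ j, (if x j = a then c else 0) = if x = (fun _ => a) then c ^ Fintype.card ι else 0 := by
  rw [Fintype.prod_ite_zero, prod_const, card_univ]
  simp only [funext_iff]

theorem pauli_zero_apply (a b : Fin 2) : pauli 0 a b = if a ≠ b then 1 else 0 := by
  fin_cases a <;> fin_cases b <;> simp [pauli]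

theorem pauli_one_apply (a b : Fin 2) :
    pauli 1 a b = if a ≠ b then -Complex.I * (-1) ^ (a : ℕ) else 0 := by
  fin_cases a <;> fin_cases b <;> simp [pauli]

theorem pauli_two_apply (a b : Fin 2) : pauli 2 a b = if a = b then (-1) ^ (a : ℕ) else 0 := by
  fin_cases a <;> fin_cases b <;> simp [pauli]

variable {N : ℕ}

theorem tensorProd_apply (A : Fin N → Matrix (Fin 2) (Fin 2) ℂ) (x y : Fin N → Fin 2) :
    tensorProd A x y = ∏ j, A j (x j) (y j) := rfl

theorem tensorProd_pauliZ_apply (S : Finset (Fin N)) (x y : Fin N → Fin 2) :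
    tensorProd (fun j => if j ∈ S then pauli 2 else 1) x y =
      if y = x then ∏ j ∈ S, (-1 : ℂ) ^ (x j : ℕ) else 0 := by
  have factor : ∀ j, (if j ∈ S then pauli 2 else 1) (x j) (y j) =
      if y j = x j then (if j ∈ S then (-1 : ℂ) ^ (x j : ℕ) else 1) else 0 := fun j => by
    split_ifs <;> simp_all [pauli_two_apply, one_apply, eq_comm]
  rw [tensorProd_apply, prod_congr rfl fun j _ => factor j, Fintype.prod_ite_zero, prod_ite_mem,
    univ_inter]
  simp only [funext_iff]
  congr

theorem tensorProd_pauliYX_apply (T : Finset (Fin N)) (x y : Fin N → Fin 2) :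
    tensorProd (fun j => if j ∈ T then pauli 1 else pauli 0) x y =
      if y = (fun j => (x j).rev) then
        (-Complex.I) ^ T.card * ∏ j ∈ T, (-1 : ℂ) ^ (x j : ℕ) else 0 := by
  have factor : ∀ j, (if j ∈ T then pauli 1 else pauli 0) (x j) (y j) =
      if y j = (x j).rev then (if j ∈ T then -Complex.I * (-1 : ℂ) ^ (x j : ℕ) else 1) else 0 :=
    fun j => by split_ifs <;> simp_all [pauli_one_apply, pauli_zero_apply, Fin.two_ne_iff_eq_rev]
  rw [tensorProd_apply, prod_congr rfl fun j _ => factor j, Fintype.prod_ite_zero, prod_ite_mem,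
    univ_inter, prod_mul_distrib, prod_const]
  simp only [funext_iff]
  congr

def evenSignSum (x : Fin N → Fin 2) : ℂ :=
  ∑ S ∈ univ.filter (fun S : Finset (Fin N) => Even S.card), ∏ j ∈ S, (-1 : ℂ) ^ (x j : ℕ)

theorem sum_pauliZ_apply (x y : Fin N → Fin 2) :
    (∑ S ∈ univ.filter (fun S : Finset (Fin N) => Even S.card),
        tensorProd (fun j => if j ∈ S then pauli 2 else 1)) x y =
      if y = x then evenSignSum x else 0 := by
  simp only [Matrix.sum_apply, tensorProd_pauliZ_apply, evenSignSum]
  split_ifs <;> simp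

theorem sum_pauliYX_apply (x y : Fin N → Fin 2) :
    (∑ T ∈ univ.filter (fun T : Finset (Fin N) => Even T.card),
        ((-1 : ℂ) ^ (T.card / 2)) • tensorProd (fun j => if j ∈ T then pauli 1 else pauli 0)) x y =
      if y = (fun j => (x j).rev) then evenSignSum x else 0 := by
  simp only [Matrix.sum_apply, Matrix.smul_apply, tensorProd_pauliYX_apply, evenSignSum,
    smul_eq_mul]
  split_ifs
  · refine sum_congr rfl fun T hT => ?_
    rw [← mul_assoc, neg_one_pow_div_two_mul_neg_I_pow (mem_filter.mp hT).2, one_mul]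
  · simp

theorem prod_one_add_neg_one_pow (x : Fin N → Fin 2) :
    ∏ j, (1 + (-1 : ℂ) ^ (x j : ℕ)) = if x = (fun _ => 0) then 2 ^ N else 0 := by
  have factor : ∀ a : Fin 2, 1 + (-1 : ℂ) ^ (a : ℕ) = if a = 0 then 2 else 0 := by
    intro a; fin_cases a <;> norm_num
  rw [prod_congr rfl fun j _ => factor (x j), Fintype.prod_ite_eq_const, Fintype.card_fin]

theorem prod_one_sub_neg_one_pow (x : Fin N → Fin 2) :
    ∏ j, (1 - (-1 : ℂ) ^ (x j : ℕ)) = if x = (fun _ => 1) then 2 ^ N else 0 := by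
  have factor : ∀ a : Fin 2, 1 - (-1 : ℂ) ^ (a : ℕ) = if a = 1 then 2 else 0 := by
    intro a; fin_cases a <;> norm_num
  rw [prod_congr rfl fun j _ => factor (x j), Fintype.prod_ite_eq_const, Fintype.card_fin]

theorem two_mul_evenSignSum (x : Fin N → Fin 2) :
    2 * evenSignSum x =
      (if x = (fun _ => 0) then 2 ^ N else 0) + if x = (fun _ => 1) then 2 ^ N else 0 := by
  rw [evenSignSum, two_mul_sum_filter_even_card_prod, prod_one_add_neg_one_pow,
    prod_one_sub_neg_one_pow]

theorem const_zero_ne_const_one (hN : 1 ≤ N) : (fun _ : Fin N => (0 : Fin 2)) ≠ fun _ => 1 :=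
  fun h => zero_ne_one (congrFun h ⟨0, hN⟩)

theorem evenSignSum_eq (hN : 1 ≤ N) (x : Fin N → Fin 2) :
    evenSignSum x = if x = (fun _ => 0) ∨ x = (fun _ => 1) then 2 ^ N / 2 else 0 := by
  have h01 := const_zero_ne_const_one hN
  apply mul_left_cancel₀ (two_ne_zero' ℂ)
  rw [two_mul_evenSignSum]
  by_cases hx0 : x = fun _ => 0 <;> by_cases hx1 : x = fun _ => 1 <;> simp_all <;> ring

theorem outer_ghz_apply (x y : Fin N → Fin 2) :
    outer (ghz N) x y =
      if (x = (fun _ => 0) ∨ x = (fun _ => 1)) ∧ (y = (fun _ => 0) ∨ y = (fun _ => 1))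
      then 1 / 2 else 0 := by
  have hsqrt : (Real.sqrt 2 : ℂ) * Real.sqrt 2 = 2 := by
    rw [← Complex.ofReal_mul, Real.mul_self_sqrt zero_le_two, Complex.ofReal_ofNat]
  rw [outer, of_apply, ghz, ghz]
  split_ifs <;> simp_all [Complex.conj_ofReal, ← mul_inv]

theorem rev_ne_self (hN : 1 ≤ N) (x : Fin N → Fin 2) : (fun j => (x j).rev) ≠ x :=
  fun h => (Fin.two_ne_iff_eq_rev _ _).2 rfl (congrFun h ⟨0, hN⟩).symm

theorem eq_const_or_eq_const_iff {x : Fin N → Fin 2}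
    (hx : x = (fun _ => 0) ∨ x = (fun _ => 1)) (y : Fin N → Fin 2) :
    (y = (fun _ => 0) ∨ y = (fun _ => 1)) ↔ y = x ∨ y = fun j => (x j).rev := by
  -- `Fin.rev` swaps `0` and `1` definitionally.
  rcases hx with rfl | rfl
  · rfl
  · exact or_comm

/-- Pauli-basis decomposition of the N-qubit GHZ density matrix:
`|GHZ_N⟩⟨GHZ_N| = (1/2^N)·[ Σ_{S even} Z_S + Σ_{T even} (−1)^{|T|/2}·W_T ]`,
where `Z_S` is `Z` on `S` and `I₂` elsewhere, and `W_T` is `Y` on `T` and `X` elsewhere. -/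
theorem ghz_pauli_decomposition {N : ℕ} (hN : 1 ≤ N) :
    outer (ghz N) = (1 / 2 ^ N : ℂ) •
      ((∑ S ∈ Finset.univ.filter (fun S : Finset (Fin N) => Even S.card),
          tensorProd (fun j => if j ∈ S then pauli 2 else 1)) +
       ∑ T ∈ Finset.univ.filter (fun T : Finset (Fin N) => Even T.card),
          ((-1 : ℂ) ^ (T.card / 2)) •
            tensorProd (fun j => if j ∈ T then pauli 1 else pauli 0)) := by
  ext x y
  rw [outer_ghz_apply, Matrix.smul_apply, Matrix.add_apply, sum_pauliZ_apply, sum_pauliYX_apply,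
    smul_eq_mul, evenSignSum_eq hN]
  by_cases hx : x = (fun _ => 0) ∨ x = (fun _ => 1)
  · have hne := rev_ne_self hN x
    simp only [hx, true_and, if_true, eq_const_or_eq_const_iff hx]
    split_ifs <;> simp_all <;> field_simp
  · simp [hx]
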